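/- If 0 ≤ λ < 1 and 0 ≤ μ < 1, then every trajectory of the system x_{t+1,1} = λ x_{t,1}, x_{t+1,2} = μ x_{t,2} + (λ² − μ) x_{t,1}² converges to the origin as t → ∞. -/
import Mathlib


theorem trajectories_converge_to_origin (l m : ℝ)
    (hl0 : 0 ≤ l) (hl1 : l < 1) (hm0 : 0 ≤ m) (hm1 : m < 1)
    (F : ℝ × ℝ → ℝ × ℝ) (hF : ∀ x : ℝ × ℝ, F x = (l * x.1, m * x.2 + (l ^ 2 - m) * x.1 ^ 2))
    (x₀ : ℝ × ℝ) :
    Filter.Tendsto (fun t : ℕ => F^[t] x₀) Filter.atTop (nhds (0, 0)) := by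
  have key : ∀ t : ℕ, F^[t] x₀ =
      (l ^ t * x₀.1, m ^ t * (x₀.2 - x₀.1 ^ 2) + (l ^ t * x₀.1) ^ 2) := by
    intro t
    induction t with
    | zero => simp
    | succ n ih =>
      rw [Function.iterate_succ_apply', ih, hF]
      simp only [Prod.mk.injEq]
      constructor
      · ring
      · ring
  simp only [key]
  have h1 : Filter.Tendsto (fun t : ℕ => l ^ t * x₀.1) Filter.atTop (nhds 0) := by
    have := (tendsto_pow_atTop_nhds_zero_of_lt_one hl0 hl1).mul_const x₀.1
    simpa using this
  have h2 : Filter.Tendsto (fun t : ℕ => m ^ t * (x₀.2 - x₀.1 ^ 2) + (l ^ t * x₀.1) ^ 2)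
      Filter.atTop (nhds 0) := by
    have hm := (tendsto_pow_atTop_nhds_zero_of_lt_one hm0 hm1).mul_const (x₀.2 - x₀.1 ^ 2)
    have hsq := (h1.mul h1)
    simp only [mul_zero, zero_mul] at hm hsq
    have := hm.add hsq
    simp only [add_zero] at this
    refine this.congr ?_
    intro t
    ring
  exact h1.prodMk_nhds h2
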